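/- Fix two distinct points A, B ∈ ℝ³. A probability measure p₂ supported on {A,B} × {A,B} is N-density representable for every N ≥ 2 if and only if p₂ is a convex combination of two mean-field measures, i.e. there exist s, t ∈ [0,1] and λ ∈ [0,1] with p₂ = λ μ_s ⊗ μ_s + (1−λ) μ_t ⊗ μ_t, where μ_r = (1−r)δ_A + rδ_B. -/

import Mathlib

open MeasureTheory ENNReal

noncomputable section

abbrev R3 : Type := EuclideanSpace ℝ (Fin 3)

def IsSymmetricMeasure {N : ℕ} (p : Measure (Fin N → R3)) : Prop :=
  ∀ σ : Equiv.Perm (Fin N), p.map (fun x => x ∘ σ) = p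

def pairMarginal {N : ℕ} (hN : 2 ≤ N) (p : Measure (Fin N → R3)) : Measure (R3 × R3) :=
  p.map (fun x => (x ⟨0, by omega⟩, x ⟨1, by omega⟩))

def NDensityRep (N : ℕ) (hN : 2 ≤ N) (p₂ : Measure (R3 × R3)) : Prop :=
  ∃ pN : Measure (Fin N → R3), IsProbabilityMeasure pN ∧ IsSymmetricMeasure pN ∧
    pairMarginal hN pN = p₂

/-- The single-site mixture `μ_r = (1−r)δ_A + rδ_B`. -/
def siteMixture (A B : R3) (r : ℝ≥0∞) : Measure R3 :=
  (1 - r) • Measure.dirac A + r • Measure.dirac B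

open Set

/-! ### Auxiliary lemmas -/

lemma exists_perm_two {N : ℕ} {i j k l : Fin N} (hij : i ≠ j) (hkl : k ≠ l) :
    ∃ σ : Equiv.Perm (Fin N), σ i = k ∧ σ j = l := by
  classical
  set τ : Equiv.Perm (Fin N) := Equiv.swap i k with hτ
  have hτi : τ i = k := Equiv.swap_apply_left i k
  have hτj : τ j ≠ k := by
    intro h
    exact hij (τ.injective (h.trans hτi.symm)).symm
  refine ⟨τ.trans (Equiv.swap (τ j) l), ?_, ?_⟩
  · simp only [Equiv.trans_apply, hτi]
    rw [Equiv.swap_apply_of_ne_of_ne (by exact fun h => hτj h.symm) hkl]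
  · simp only [Equiv.trans_apply, Equiv.swap_apply_left]

lemma sq_lintegral_le {α : Type*} [MeasurableSpace α] (μ : Measure α) [IsProbabilityMeasure μ]
    {f : α → ℝ≥0∞} (hf : Measurable f) :
    (∫⁻ x, f x ∂μ) ^ 2 ≤ ∫⁻ x, (f x) ^ 2 ∂μ := by
  have hpq : (2:ℝ).HolderConjugate 2 := ⟨by norm_num, by norm_num, by norm_num⟩
  have h := ENNReal.lintegral_mul_le_Lp_mul_Lq μ hpq hf.aemeasurable
      (aemeasurable_const (b := (1:ℝ≥0∞)))
  simp only [Pi.mul_apply, mul_one, ENNReal.one_rpow, lintegral_const, measure_univ,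
    ENNReal.one_rpow, one_mul] at h
  have h2 : ∀ y : ℝ≥0∞, y ^ (2:ℝ) = y ^ 2 := fun y => by
    rw [← ENNReal.rpow_natCast y 2]; norm_num
  simp only [h2] at h
  calc (∫⁻ x, f x ∂μ) ^ 2 ≤ ((∫⁻ x, (f x)^2 ∂μ) ^ (1/(2:ℝ))) ^ 2 := by
        exact pow_le_pow_left' h 2
    _ = ∫⁻ x, (f x)^2 ∂μ := by
        rw [← ENNReal.rpow_natCast _ 2, ← ENNReal.rpow_mul]; norm_num

lemma pi_map_perm {N : ℕ} {α : Type*} [MeasurableSpace α] (μ : Measure α)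
    [IsProbabilityMeasure μ] (σ : Equiv.Perm (Fin N)) :
    (Measure.pi fun _ : Fin N => μ).map (fun x => x ∘ σ) = Measure.pi (fun _ : Fin N => μ) := by
  have hm : Measurable (fun x : Fin N → α => x ∘ σ) :=
    measurable_pi_lambda _ (fun i => measurable_pi_apply (σ i))
  refine (Measure.pi_eq fun s hs => ?_).symm
  rw [Measure.map_apply hm (MeasurableSet.univ_pi hs)]
  have hpre : (fun x : Fin N → α => x ∘ σ) ⁻¹' (univ.pi s) = univ.pi (fun i => s (σ.symm i)) := by
    ext x
    simp only [mem_preimage, mem_pi, mem_univ, forall_true_left, Function.comp_apply, true_implies]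
    constructor
    · intro h i; simpa using h (σ.symm i)
    · intro h i; simpa using h (σ i)
  rw [hpre, Measure.pi_pi]
  exact Equiv.prod_comp σ.symm (fun i => μ (s i))

lemma pi_map_pair {N : ℕ} (hN : 2 ≤ N) {α : Type*} [MeasurableSpace α] (μ : Measure α)
    [IsProbabilityMeasure μ] :
    (Measure.pi fun _ : Fin N => μ).map
        (fun x => (x ⟨0, by omega⟩, x ⟨1, by omega⟩)) = μ.prod μ := by
  classical
  set i0 : Fin N := ⟨0, by omega⟩
  set i1 : Fin N := ⟨1, by omega⟩
  have h01 : i0 ≠ i1 := by simp [i0, i1, Fin.ext_iff]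
  have hm : Measurable (fun x : Fin N → α => (x i0, x i1)) :=
    (measurable_pi_apply i0).prodMk (measurable_pi_apply i1)
  refine (Measure.prod_eq fun s t hs ht => ?_).symm
  rw [Measure.map_apply hm (hs.prod ht)]
  set f : Fin N → Set α := fun i => if i = i0 then s else if i = i1 then t else univ with hf
  have hpre : (fun x : Fin N → α => (x i0, x i1)) ⁻¹' (s ×ˢ t) = univ.pi f := by
    ext x
    simp only [mem_preimage, mem_prod, mem_pi, mem_univ, true_implies, hf]
    constructor
    · rintro ⟨h1, h2⟩ i
      by_cases e0 : i = i0
      · subst e0; simpa using h1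
      by_cases e1 : i = i1
      · subst e1; simp [e0, h2]
      · simp [e0, e1]
    · intro h
      refine ⟨?_, ?_⟩
      · have := h i0; simpa using this
      · have := h i1; simpa [h01.symm] using this
  rw [hpre, Measure.pi_pi]
  have : ∀ i, μ (f i) = if i = i0 then μ s else if i = i1 then μ t else 1 := by
    intro i; by_cases e0 : i = i0 <;> by_cases e1 : i = i1 <;> simp [hf, e0, e1, h01.symm]
  simp only [this]
  rw [← Finset.mul_prod_erase Finset.univ _ (Finset.mem_univ i0)]
  rw [← Finset.mul_prod_erase _ _ (Finset.mem_erase.2 ⟨h01.symm, Finset.mem_univ i1⟩)]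
  rw [Finset.prod_eq_one, if_pos rfl, if_neg h01.symm, if_pos rfl, mul_one]
  intro i hi
  simp only [Finset.mem_erase] at hi
  simp [hi.1, hi.2.1]

lemma S2_eq (A B : R3) : (({A, B} : Set R3) ×ˢ ({A, B} : Set R3)) =
    {(A,A)} ∪ ({(A,B)} ∪ ({(B,A)} ∪ {(B,B)})) := by
  ext ⟨x, y⟩
  simp only [mem_prod, mem_insert_iff, mem_singleton_iff, mem_union, Prod.mk.injEq]
  tauto

lemma measurableSet_S2 {A B : R3} : MeasurableSet (({A, B} : Set R3) ×ˢ ({A, B} : Set R3)) :=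
  (((measurableSet_singleton A).union (measurableSet_singleton B))).prod
    (((measurableSet_singleton A).union (measurableSet_singleton B)))

/-- Decomposition of a measure supported on the four points. -/
lemma decomp4 {A B : R3} (hAB : A ≠ B) (m : Measure (R3 × R3))
    (hm : m ((({A, B} : Set R3) ×ˢ ({A, B} : Set R3))ᶜ) = 0) :
    m = m {(A,A)} • Measure.dirac (A,A) + m {(A,B)} • Measure.dirac (A,B)
      + m {(B,A)} • Measure.dirac (B,A) + m {(B,B)} • Measure.dirac (B,B) := by
  have hS : MeasurableSet (({A, B} : Set R3) ×ˢ ({A, B} : Set R3)) := measurableSet_S2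
  have hrestr : m.restrict (({A, B} : Set R3) ×ˢ ({A, B} : Set R3)) = m := by
    ext E hE
    rw [Measure.restrict_apply hE]
    have h1 : m E = m (E ∩ (({A, B} : Set R3) ×ˢ ({A, B} : Set R3)))
        + m (E \ (({A, B} : Set R3) ×ˢ ({A, B} : Set R3))) :=
      (measure_inter_add_diff E hS).symm
    have h2 : m (E \ (({A, B} : Set R3) ×ˢ ({A, B} : Set R3))) = 0 :=
      le_antisymm (le_trans (measure_mono (diff_subset_compl _ _)) hm.le) zero_le
    rw [h1, h2, add_zero]
  have hd1 : ((A,A) : R3 × R3) ≠ (A,B) := by simp [Prod.ext_iff, hAB]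
  have hd2 : ((A,A) : R3 × R3) ≠ (B,A) := by simp [Prod.ext_iff, hAB]
  have hd3 : ((A,A) : R3 × R3) ≠ (B,B) := by simp [Prod.ext_iff, hAB]
  have hd4 : ((A,B) : R3 × R3) ≠ (B,A) := by simp [Prod.ext_iff, hAB]
  have hd5 : ((A,B) : R3 × R3) ≠ (B,B) := by simp [Prod.ext_iff, hAB]
  have hd6 : ((B,A) : R3 × R3) ≠ (B,B) := by simp [Prod.ext_iff, hAB]
  conv_lhs => rw [← hrestr, S2_eq A B]
  rw [Measure.restrict_union (by simp [Set.disjoint_left, hd1, hd2, hd3])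
      (((measurableSet_singleton _).union ((measurableSet_singleton _).union
        (measurableSet_singleton _))))]
  rw [Measure.restrict_union (by simp [Set.disjoint_left, hd4, hd5])
      ((measurableSet_singleton _).union (measurableSet_singleton _))]
  rw [Measure.restrict_union (by simp [Set.disjoint_left, hd6]) (measurableSet_singleton _)]
  simp only [Measure.restrict_singleton]
  abel

lemma siteMixture_prob {A B : R3} {r : ℝ≥0∞} (hr : r ≤ 1) :
    IsProbabilityMeasure (siteMixture A B r) := by
  constructor
  simp only [siteMixture, Measure.add_apply, Measure.smul_apply, smul_eq_mul, measure_univ,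
    mul_one]
  exact tsub_add_cancel_of_le hr

lemma siteMixture_A {A B : R3} (hAB : A ≠ B) (r : ℝ≥0∞) : siteMixture A B r {A} = 1 - r := by
  simp [siteMixture, Measure.dirac_apply, indicator_apply, hAB.symm]

lemma siteMixture_B {A B : R3} (hAB : A ≠ B) (r : ℝ≥0∞) : siteMixture A B r {B} = r := by
  simp [siteMixture, Measure.dirac_apply, indicator_apply, hAB]

lemma siteMixture_AB {A B : R3} (r : ℝ≥0∞) : siteMixture A B r ({A, B} : Set R3)ᶜ = 0 := by
  have : siteMixture A B r ({A, B} : Set R3)ᶜ ≤ (1 - r) * Measure.dirac A ({A, B} : Set R3)ᶜ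
      + r * Measure.dirac B ({A, B} : Set R3)ᶜ := le_of_eq (by
    simp [siteMixture])
  have h1 : Measure.dirac A (({A, B} : Set R3)ᶜ) = 0 := by
    simp [Measure.dirac_apply, indicator_apply]
  have h2 : Measure.dirac B (({A, B} : Set R3)ᶜ) = 0 := by
    simp [Measure.dirac_apply, indicator_apply]
  simpa [h1, h2] using this

lemma siteMixture_prod_compl {A B : R3} {r : ℝ≥0∞} (hr : r ≤ 1) :
    ((siteMixture A B r).prod (siteMixture A B r))
      ((({A, B} : Set R3) ×ˢ ({A, B} : Set R3))ᶜ) = 0 := by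
  haveI := siteMixture_prob (A := A) (B := B) hr
  have hsub : ((({A, B} : Set R3) ×ˢ ({A, B} : Set R3))ᶜ) ⊆
      (Prod.fst ⁻¹' ({A, B} : Set R3)ᶜ) ∪ (Prod.snd ⁻¹' ({A, B} : Set R3)ᶜ) := by
    rintro ⟨x, y⟩ h
    simp only [mem_compl_iff, mem_prod, not_and_or] at h
    simpa using h
  refine le_antisymm (le_trans (measure_mono hsub) ?_) zero_le
  refine le_trans (measure_union_le _ _) ?_
  have e1 : ((siteMixture A B r).prod (siteMixture A B r)) (Prod.fst ⁻¹' ({A, B} : Set R3)ᶜ)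
      = 0 := by
    rw [← Set.prod_univ, Measure.prod_prod, siteMixture_AB r, zero_mul]
  have e2 : ((siteMixture A B r).prod (siteMixture A B r)) (Prod.snd ⁻¹' ({A, B} : Set R3)ᶜ)
      = 0 := by
    rw [← Set.univ_prod, Measure.prod_prod, siteMixture_AB r, mul_zero]
  simp [← Set.preimage_compl, e1, e2]

lemma siteMixture_prod_pt {A B : R3} (u v : R3) {r : ℝ≥0∞} (hr : r ≤ 1) :
    ((siteMixture A B r).prod (siteMixture A B r)) {(u, v)}
      = siteMixture A B r {u} * siteMixture A B r {v} := by
  haveI := siteMixture_prob (A := A) (B := B) hr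
  rw [← Set.singleton_prod_singleton, Measure.prod_prod]

lemma moment_rel {A : R3} (B : R3) (p₂ : Measure (R3 × R3)) [IsProbabilityMeasure p₂] {N : ℕ}
    {hN : 2 ≤ N} (h : NDensityRep N hN p₂) :
    (∀ u v : R3, p₂ {(u,v)} = p₂ {(v,u)}) ∧
    ((N:ℝ≥0∞) * p₂ ({B} ×ˢ univ))^2
      ≤ (N:ℝ≥0∞) * (p₂ ({B} ×ˢ univ) + ((N-1:ℕ):ℝ≥0∞) * p₂ {(B,B)}) := by
  classical
  obtain ⟨pN, hprob, hsym, hmarg⟩ := h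
  set i0 : Fin N := ⟨0, by omega⟩
  set i1 : Fin N := ⟨1, by omega⟩
  have h01 : i0 ≠ i1 := by simp [i0, i1, Fin.ext_iff]
  have hπ : Measurable (fun x : Fin N → R3 => (x i0, x i1)) :=
    (measurable_pi_apply i0).prodMk (measurable_pi_apply i1)
  have hp2 : ∀ E : Set (R3 × R3), MeasurableSet E → p₂ E = pN ((fun x => (x i0, x i1)) ⁻¹' E) := by
    intro E hE
    rw [← hmarg, pairMarginal, Measure.map_apply hπ hE]
  have hs : ∀ i : Fin N, MeasurableSet {x : Fin N → R3 | x i = B} := by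
    intro i
    have : {x : Fin N → R3 | x i = B} = (fun x : Fin N → R3 => x i) ⁻¹' {B} := rfl
    rw [this]
    exact (measurable_pi_apply i) (measurableSet_singleton B)
  have hsuv : ∀ (u v : R3) (i j : Fin N),
      MeasurableSet ({x : Fin N → R3 | x i = u} ∩ {x | x j = v}) :=
    by
    intro u v i j
    have h1 : {x : Fin N → R3 | x i = u} = (fun x : Fin N → R3 => x i) ⁻¹' {u} := rfl
    have h2 : {x : Fin N → R3 | x j = v} = (fun x : Fin N → R3 => x j) ⁻¹' {v} := rfl
    rw [h1, h2]
    exact ((measurable_pi_apply i) (measurableSet_singleton u)).inter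
      ((measurable_pi_apply j) (measurableSet_singleton v))
  have Cuv : ∀ (u v : R3) (i j : Fin N), i ≠ j →
      pN ({x | x i = u} ∩ {x | x j = v}) = p₂ {(u,v)} := by
    intro u v i j hij
    obtain ⟨σ, hσi, hσj⟩ := exists_perm_two hij h01
    have hcomp : Measurable (fun x : Fin N → R3 => x ∘ σ) :=
      measurable_pi_lambda _ (fun k => measurable_pi_apply (σ k))
    have step1 : pN ({x | x i = u} ∩ {x | x j = v})
        = pN ({x | x i0 = u} ∩ {x | x i1 = v}) := by
      conv_lhs => rw [← hsym σ]
      rw [Measure.map_apply hcomp (hsuv u v i j)]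
      congr 1
      ext x
      simp only [mem_preimage, mem_inter_iff, mem_setOf_eq, Function.comp_apply, hσi, hσj]
    rw [step1, hp2 _ (measurableSet_singleton _)]
    congr 1
    ext x
    simp [Prod.ext_iff]
  have Cu : ∀ i : Fin N, pN {x | x i = B} = p₂ ({B} ×ˢ univ) := by
    intro i
    have hσi : (Equiv.swap i i0) i = i0 := Equiv.swap_apply_left i i0
    have hcomp : Measurable (fun x : Fin N → R3 => x ∘ (Equiv.swap i i0)) :=
      measurable_pi_lambda _ (fun k => measurable_pi_apply _)
    have step1 : pN {x | x i = B} = pN {x | x i0 = B} := by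
      conv_lhs => rw [← hsym (Equiv.swap i i0)]
      rw [Measure.map_apply hcomp (hs i)]
      congr 1
      ext x
      simp only [mem_preimage, mem_setOf_eq, Function.comp_apply, hσi]
    rw [step1, hp2 _ ((measurableSet_singleton B).prod MeasurableSet.univ)]
    congr 1
    ext x
    simp [eq_comm]
  constructor
  · intro u v
    rw [← Cuv u v i0 i1 h01, ← Cuv v u i1 i0 h01.symm, Set.inter_comm]
  set a := p₂ ({B} ×ˢ univ) with ha
  set q := p₂ {(B,B)} with hq
  set X : (Fin N → R3) → ℝ≥0∞ :=
    fun x => ∑ i : Fin N, ({x' : Fin N → R3 | x' i = B}).indicator 1 x with hX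
  have hXm : Measurable X :=
    Finset.measurable_sum _ (fun i _ => (measurable_one).indicator (hs i))
  have hEX : ∫⁻ x, X x ∂pN = (N:ℝ≥0∞) * a := by
    rw [hX, lintegral_finset_sum _ (fun i _ => (measurable_one).indicator (hs i))]
    have : ∀ i : Fin N, ∫⁻ x, ({x' : Fin N → R3 | x' i = B}).indicator 1 x ∂pN = a := by
      intro i
      rw [lintegral_indicator_one (hs i)]
      exact Cu i
    simp only [this, Finset.sum_const, Finset.card_univ, Fintype.card_fin, nsmul_eq_mul]
  have hEX2 : ∫⁻ x, (X x)^2 ∂pN = (N:ℝ≥0∞) * (a + ((N-1:ℕ):ℝ≥0∞) * q) := by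
    have hpt : ∀ x, (X x)^2 = ∑ i : Fin N, ∑ j : Fin N,
        ({x' : Fin N → R3 | x' i = B} ∩ {x' | x' j = B}).indicator 1 x := by
      intro x
      rw [hX, sq, Finset.sum_mul_sum]
      congr 1
      ext i
      congr 1
      ext j
      rw [Set.inter_indicator_one]
      rfl
    simp only [hpt]
    rw [lintegral_finset_sum _ (fun i _ => Finset.measurable_sum _
      (fun j _ => (measurable_one).indicator (hsuv B B i j)))]
    have hinner : ∀ i : Fin N, ∫⁻ x, (∑ j : Fin N,
        ({x' : Fin N → R3 | x' i = B} ∩ {x' | x' j = B}).indicator 1 x) ∂pN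
        = a + ((N-1:ℕ):ℝ≥0∞) * q := by
      intro i
      rw [lintegral_finset_sum _ (fun j _ => (measurable_one).indicator (hsuv B B i j))]
      have hterm : ∀ j : Fin N, ∫⁻ x,
          ({x' : Fin N → R3 | x' i = B} ∩ {x' | x' j = B}).indicator 1 x ∂pN
          = pN ({x' : Fin N → R3 | x' i = B} ∩ {x' | x' j = B}) :=
        fun j => lintegral_indicator_one (hsuv B B i j)
      simp only [hterm]
      rw [← Finset.add_sum_erase Finset.univ _ (Finset.mem_univ i)]
      have hii : pN ({x' : Fin N → R3 | x' i = B} ∩ {x' | x' i = B}) = a := by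
        rw [Set.inter_self]; exact Cu i
      have hij : ∀ j ∈ Finset.univ.erase i,
          pN ({x' : Fin N → R3 | x' i = B} ∩ {x' | x' j = B}) = q := by
        intro j hj
        exact Cuv B B i j (Finset.ne_of_mem_erase hj).symm
      rw [hii, Finset.sum_congr rfl hij, Finset.sum_const,
        Finset.card_erase_of_mem (Finset.mem_univ i), Finset.card_univ, Fintype.card_fin,
        nsmul_eq_mul]
    simp only [hinner, Finset.sum_const, Finset.card_univ, Fintype.card_fin, nsmul_eq_mul]
  calc ((N:ℝ≥0∞) * a)^2 = (∫⁻ x, X x ∂pN)^2 := by rw [hEX]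
    _ ≤ ∫⁻ x, (X x)^2 ∂pN := sq_lintegral_le pN hXm
    _ = _ := hEX2

lemma sq_le_of_forall_ineq {a q : ℝ≥0∞} (ha : a ≤ 1) (hq : q ≤ 1)
    (h : ∀ N : ℕ, 2 ≤ N →
      ((N:ℝ≥0∞) * a)^2 ≤ (N:ℝ≥0∞) * (a + ((N-1:ℕ):ℝ≥0∞) * q)) :
    a.toReal * a.toReal ≤ q.toReal := by
  have hafin : a ≠ ∞ := ne_top_of_le_ne_top one_ne_top ha
  have hqfin : q ≠ ∞ := ne_top_of_le_ne_top one_ne_top hq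
  set av := a.toReal with hav
  set qv := q.toReal with hqv
  have h0a : 0 ≤ av := ENNReal.toReal_nonneg
  have h0q : 0 ≤ qv := ENNReal.toReal_nonneg
  have ha1 : av ≤ 1 := by
    rw [hav, ← ENNReal.toReal_one]; exact ENNReal.toReal_mono one_ne_top ha
  have hreal : ∀ N : ℕ, 2 ≤ N → ((N:ℝ) * av)^2 ≤ (N:ℝ) * (av + ((N:ℝ) - 1) * qv) := by
    intro N hN2
    have hfin : (N:ℝ≥0∞) * (a + ((N-1:ℕ):ℝ≥0∞) * q) ≠ ∞ :=
      ENNReal.mul_ne_top (ENNReal.natCast_ne_top N)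
        (ENNReal.add_ne_top.2 ⟨hafin, ENNReal.mul_ne_top (ENNReal.natCast_ne_top _) hqfin⟩)
    have := ENNReal.toReal_mono hfin (h N hN2)
    rw [ENNReal.toReal_pow, ENNReal.toReal_mul, ENNReal.toReal_mul,
      ENNReal.toReal_add hafin (ENNReal.mul_ne_top (ENNReal.natCast_ne_top _) hqfin),
      ENNReal.toReal_mul, ENNReal.toReal_natCast, ENNReal.toReal_natCast] at this
    rw [Nat.cast_sub (by omega), Nat.cast_one] at this
    exact this
  by_contra h'
  push_neg at h'
  set ε := av * av - qv with hε'
  have hε : 0 < ε := by simp [hε']; linarith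
  obtain ⟨M, hM⟩ := exists_nat_gt (1/ε)
  set N := M + 2 with hNdef
  have hN2 : 2 ≤ N := by omega
  have hMN : (1:ℝ)/ε < (N:ℝ) := lt_of_lt_of_le hM (by exact_mod_cast Nat.le_add_right M 2)
  have hIN := hreal N hN2
  have hNpos : (0:ℝ) < N := by positivity
  have h2 : (N:ℝ) * (av*av) ≤ av + ((N:ℝ)-1)*qv := by
    have h1 : (N:ℝ) * ((N:ℝ) * (av*av)) ≤ (N:ℝ) * (av + ((N:ℝ)-1)*qv) := by nlinarith [hIN]
    exact le_of_mul_le_mul_left h1 hNpos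
  have h3 : (N:ℝ) * ε ≤ 1 := by nlinarith [h2]
  have h4 : (1:ℝ) < (N:ℝ) * ε := by
    rw [div_lt_iff₀ hε] at hMN
    linarith
  linarith

lemma real_identities {av dv : ℝ} (h0a : 0 ≤ av) (ha1 : av ≤ 1) (h2 : av*av ≤ dv)
    (h3 : dv ≤ av) :
    ∃ sR lamR : ℝ, 0 ≤ sR ∧ sR ≤ 1 ∧ 0 ≤ lamR ∧ lamR ≤ 1 ∧
      lamR * (sR*sR) = dv ∧
      lamR * (sR*(1-sR)) = av - dv ∧
      lamR * ((1-sR)*(1-sR)) + (1-lamR) = 1 - av - (av - dv) := by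
  rcases eq_or_lt_of_le (le_trans (mul_nonneg h0a h0a) h2) with hd0 | hdpos
  · have hdv : dv = 0 := hd0.symm
    have hav0 : av = 0 := by nlinarith
    exact ⟨0, 1, le_refl 0, zero_le_one, zero_le_one, le_refl 1, by simp [hdv],
      by simp [hav0, hdv], by simp [hav0, hdv]⟩
  · have havpos : 0 < av := lt_of_lt_of_le hdpos h3
    refine ⟨dv/av, av*av/dv, by positivity, ?_, by positivity, ?_, ?_, ?_, ?_⟩
    · exact div_le_one_of_le₀ h3 h0a
    · exact div_le_one_of_le₀ h2 (le_of_lt hdpos)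
    · field_simp
    · field_simp
    · field_simp
      ring

/-- A probability measure supported on `{A,B} × {A,B}` is `N`-density representable for
every `N ≥ 2` if and only if it is a convex combination of two mean-field measures
`μ_s ⊗ μ_s` and `μ_t ⊗ μ_t` with `μ_r = (1−r)δ_A + rδ_B`. -/
theorem all_N_rep_iff_convex_combination_of_two_mean_fields
    (A B : R3) (hAB : A ≠ B) (p₂ : Measure (R3 × R3)) [IsProbabilityMeasure p₂]
    (hsupp : p₂ ((({A, B} : Set R3) ×ˢ ({A, B} : Set R3))ᶜ) = 0) :
    (∀ N : ℕ, ∀ hN : 2 ≤ N, NDensityRep N hN p₂) ↔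
      ∃ s t lam : ℝ≥0∞, s ≤ 1 ∧ t ≤ 1 ∧ lam ≤ 1 ∧
        p₂ = lam • ((siteMixture A B s).prod (siteMixture A B s))
              + (1 - lam) • ((siteMixture A B t).prod (siteMixture A B t)) := by
  constructor
  · intro h
    have hsymAB : p₂ {(A,B)} = p₂ {(B,A)} :=
      (moment_rel (A := A) B p₂ (h 2 le_rfl)).1 A B
    have hineq : ∀ N : ℕ, 2 ≤ N →
        ((N:ℝ≥0∞) * p₂ ({B} ×ˢ univ))^2
          ≤ (N:ℝ≥0∞) * (p₂ ({B} ×ˢ univ) + ((N-1:ℕ):ℝ≥0∞) * p₂ {(B,B)}) :=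
      fun N hN => (moment_rel (A := A) B p₂ (h N hN)).2
    have hdec := decomp4 hAB p₂ hsupp
    have haval : p₂ ({B} ×ˢ univ) = p₂ {(B,A)} + p₂ {(B,B)} := by
      conv_lhs => rw [hdec]
      simp [Measure.dirac_apply, Set.indicator_apply, hAB, hAB.symm, Prod.ext_iff]
    have hsum : p₂ {(A,A)} + p₂ {(A,B)} + p₂ {(B,A)} + p₂ {(B,B)} = 1 := by
      have h1 : p₂ univ = 1 := measure_univ
      rw [hdec] at h1
      simpa using h1
    have ha1 : p₂ ({B} ×ˢ univ) ≤ 1 := prob_le_one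
    have hq1 : p₂ {(B,B)} ≤ 1 := prob_le_one
    have key := sq_le_of_forall_ineq ha1 hq1 hineq
    set av := (p₂ ({B} ×ˢ univ)).toReal with hav
    set dv := (p₂ {(B,B)}).toReal with hdv
    have hfa : p₂ ({B} ×ˢ univ) ≠ ∞ := measure_ne_top p₂ _
    have hfq : p₂ {(B,B)} ≠ ∞ := measure_ne_top p₂ _
    have hfγ : p₂ {(B,A)} ≠ ∞ := measure_ne_top p₂ _
    have hfβ : p₂ {(A,B)} ≠ ∞ := measure_ne_top p₂ _
    have hfα : p₂ {(A,A)} ≠ ∞ := measure_ne_top p₂ _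
    have h0a : 0 ≤ av := ENNReal.toReal_nonneg
    have hav1 : av ≤ 1 := by
      rw [hav, ← ENNReal.toReal_one]; exact ENNReal.toReal_mono one_ne_top ha1
    have hqlea : p₂ {(B,B)} ≤ p₂ ({B} ×ˢ univ) := by rw [haval]; exact le_add_self
    have h3 : dv ≤ av := ENNReal.toReal_mono hfa hqlea
    obtain ⟨sR, lamR, hs0, hs1, hl0, hl1, e1, e2, e3⟩ := real_identities h0a hav1 key h3
    refine ⟨ENNReal.ofReal sR, 0, ENNReal.ofReal lamR, ENNReal.ofReal_le_one.2 hs1,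
      zero_le_one, ENNReal.ofReal_le_one.2 hl1, ?_⟩
    have hsle : ENNReal.ofReal sR ≤ 1 := ENNReal.ofReal_le_one.2 hs1
    -- conversion facts
    have hones : (1 : ℝ≥0∞) - ENNReal.ofReal sR = ENNReal.ofReal (1 - sR) := by
      rw [← ENNReal.ofReal_one]
      exact (ENNReal.ofReal_sub 1 hs0).symm
    have honel : (1 : ℝ≥0∞) - ENNReal.ofReal lamR = ENNReal.ofReal (1 - lamR) := by
      rw [← ENNReal.ofReal_one]
      exact (ENNReal.ofReal_sub 1 hl0).symm
    -- toReal relations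
    have hγv : (p₂ {(B,A)}).toReal = av - dv := by
      have := congrArg ENNReal.toReal haval
      rw [ENNReal.toReal_add hfγ hfq] at this
      rw [← hav, ← hdv] at this
      linarith
    have hβv : (p₂ {(A,B)}).toReal = av - dv := by rw [hsymAB]; exact hγv
    have hαv : (p₂ {(A,A)}).toReal = 1 - av - (av - dv) := by
      have := congrArg ENNReal.toReal hsum
      rw [ENNReal.toReal_add (by
            exact ENNReal.add_ne_top.2 ⟨ENNReal.add_ne_top.2 ⟨hfα, hfβ⟩, hfγ⟩) hfq,
          ENNReal.toReal_add (ENNReal.add_ne_top.2 ⟨hfα, hfβ⟩) hfγ,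
          ENNReal.toReal_add hfα hfβ, ENNReal.toReal_one] at this
      rw [← hdv] at this
      rw [hβv, hγv] at this
      linarith
    -- singleton values of the mixtures
    have hμsA : siteMixture A B (ENNReal.ofReal sR) {A} = ENNReal.ofReal (1 - sR) := by
      rw [siteMixture_A hAB, hones]
    have hμsB : siteMixture A B (ENNReal.ofReal sR) {B} = ENNReal.ofReal sR :=
      siteMixture_B hAB _
    have hμtA : siteMixture A B 0 {A} = 1 := by
      rw [siteMixture_A hAB]; simp
    have hμtB : siteMixture A B 0 {B} = 0 := siteMixture_B hAB 0
    set R : Measure (R3 × R3) :=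
      ENNReal.ofReal lamR • ((siteMixture A B (ENNReal.ofReal sR)).prod
          (siteMixture A B (ENNReal.ofReal sR)))
        + (1 - ENNReal.ofReal lamR) • ((siteMixture A B 0).prod (siteMixture A B 0)) with hR
    have hRnull : R ((({A, B} : Set R3) ×ˢ ({A, B} : Set R3))ᶜ) = 0 := by
      rw [hR]
      simp [Measure.add_apply, Measure.smul_apply, siteMixture_prod_compl hsle,
        siteMixture_prod_compl (zero_le_one (α := ℝ≥0∞))]
    have hRpt : ∀ u v : R3, R {(u,v)}
        = ENNReal.ofReal lamR * (siteMixture A B (ENNReal.ofReal sR) {u}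
            * siteMixture A B (ENNReal.ofReal sR) {v})
          + ENNReal.ofReal (1 - lamR) * (siteMixture A B 0 {u} * siteMixture A B 0 {v}) := by
      intro u v
      rw [hR]
      simp only [Measure.add_apply, Measure.smul_apply, smul_eq_mul]
      rw [siteMixture_prod_pt u v hsle, siteMixture_prod_pt u v (zero_le_one (α := ℝ≥0∞)), honel]
    -- the four point equalities
    have eBB : p₂ {(B,B)} = R {(B,B)} := by
      rw [hRpt, hμsB, hμtB]
      rw [← ENNReal.ofReal_mul hs0, ← ENNReal.ofReal_mul hl0, e1]
      simp [ENNReal.ofReal_toReal hfq]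
      exact (ENNReal.ofReal_toReal hfq).symm
    have eBA : p₂ {(B,A)} = R {(B,A)} := by
      rw [hRpt, hμsB, hμsA, hμtB, hμtA]
      rw [← ENNReal.ofReal_mul hs0, ← ENNReal.ofReal_mul hl0, e2]
      have : p₂ {(B,A)} = ENNReal.ofReal (av - dv) := by
        rw [← hγv, ENNReal.ofReal_toReal hfγ]
      simp [this]
    have eAB : p₂ {(A,B)} = R {(A,B)} := by
      rw [hRpt, hμsB, hμsA, hμtB, hμtA]
      have hcomm : ENNReal.ofReal (1-sR) * ENNReal.ofReal sR
          = ENNReal.ofReal (sR * (1 - sR)) := by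
        rw [ENNReal.ofReal_mul hs0, mul_comm]
      rw [hcomm, ← ENNReal.ofReal_mul hl0, e2]
      have : p₂ {(A,B)} = ENNReal.ofReal (av - dv) := by
        rw [← hβv, ENNReal.ofReal_toReal hfβ]
      simp [this]
    have eAA : p₂ {(A,A)} = R {(A,A)} := by
      rw [hRpt, hμsA, hμtA]
      rw [← ENNReal.ofReal_mul (sub_nonneg.2 hs1), ← ENNReal.ofReal_mul hl0, mul_one, mul_one,
        ← ENNReal.ofReal_add (mul_nonneg hl0 (mul_nonneg (sub_nonneg.2 hs1) (sub_nonneg.2 hs1)))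
          (sub_nonneg.2 hl1), e3]
      rw [← hαv, ENNReal.ofReal_toReal hfα]
    calc p₂ = p₂ {(A,A)} • Measure.dirac (A,A) + p₂ {(A,B)} • Measure.dirac (A,B)
          + p₂ {(B,A)} • Measure.dirac (B,A) + p₂ {(B,B)} • Measure.dirac (B,B) := hdec
      _ = R {(A,A)} • Measure.dirac (A,A) + R {(A,B)} • Measure.dirac (A,B)
          + R {(B,A)} • Measure.dirac (B,A) + R {(B,B)} • Measure.dirac (B,B) := by
          rw [eAA, eAB, eBA, eBB]
      _ = R := (decomp4 hAB R hRnull).symm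
  · rintro ⟨s, t, lam, hs, ht, hlam, heq⟩ N hN
    haveI hps : IsProbabilityMeasure (siteMixture A B s) := siteMixture_prob hs
    haveI hpt : IsProbabilityMeasure (siteMixture A B t) := siteMixture_prob ht
    refine ⟨lam • Measure.pi (fun _ : Fin N => siteMixture A B s)
        + (1 - lam) • Measure.pi (fun _ : Fin N => siteMixture A B t), ?_, ?_, ?_⟩
    · constructor
      simp only [Measure.add_apply, Measure.smul_apply, smul_eq_mul, measure_univ, mul_one]
      rw [add_comm]
      exact tsub_add_cancel_of_le hlam
    · intro σ
      have hcomp : Measurable (fun x : Fin N → R3 => x ∘ σ) :=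
        measurable_pi_lambda _ (fun i => measurable_pi_apply (σ i))
      rw [Measure.map_add _ _ hcomp, Measure.map_smul, Measure.map_smul,
        pi_map_perm _ σ, pi_map_perm _ σ]
    · have hπ : Measurable (fun x : Fin N → R3 =>
          (x (⟨0, by omega⟩ : Fin N), x (⟨1, by omega⟩ : Fin N))) :=
        (measurable_pi_apply _).prodMk (measurable_pi_apply _)
      rw [pairMarginal, Measure.map_add _ _ hπ, Measure.map_smul, Measure.map_smul,
        pi_map_pair hN (siteMixture A B s), pi_map_pair hN (siteMixture A B t), ← heq]

end
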